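/- Governed stuttering bisimilarity is an equivalence relation: if R and S are governed stuttering bisimulations, then the reflexive-transitive closure (R ∪ S)* is again a governed stuttering bisimulation; hence the union of all governed stuttering bisimulations is a governed stuttering bisimulation. -/

import Mathlib

universe u

/-- A parity game: a directed graph with a total edge relation, a priority
function and an owner function (`true` = player even, `false` = player odd). -/
structure ParityGame (V : Type u) where
  edge : V → V → Prop
  total : ∀ v, ∃ w, edge v w
  prio : V → ℕ
  owner : V → Bool

namespace ParityGame

variable {V : Type u}

/-- A (history-dependent) strategy: given the history of previously visited
vertices and the current vertex, choose a successor.  Only the values at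
vertices owned by the given player matter. -/
abbrev Strategy (V : Type u) : Type u := List V → V → V

variable (G : ParityGame V)

/-- A strategy is valid for player `i` if it always proposes edges. -/
def ValidStrategy (i : Bool) (σ : Strategy V) : Prop :=
  ∀ h v, G.owner v = i → G.edge v (σ h v)

/-- A memoryless strategy only depends on the current vertex. -/
def Memoryless (σ : Strategy V) : Prop := ∀ h h' v, σ h v = σ h' v

/-- An (infinite) play is an infinite path in the game graph. -/
def IsPlay (p : ℕ → V) : Prop := ∀ n, G.edge (p n) (p (n + 1))

/-- The history of a play before position `n`. -/
def hist (p : ℕ → V) (n : ℕ) : List V := List.ofFn (fun k : Fin n => p k)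

/-- A play is consistent with a strategy `σ` of player `i` if at every vertex
owned by `i` the play follows `σ`. -/
def Consistent (i : Bool) (σ : Strategy V) (p : ℕ → V) : Prop :=
  ∀ n, G.owner (p n) = i → p (n + 1) = σ (hist p n) (p n)

/-- `G.ForcesVia i σ v U T`: every play from `v` consistent with `σ` reaches
`T`, all earlier vertices lying in `U`. -/
def ForcesVia (i : Bool) (σ : Strategy V) (v : V) (U T : Set V) : Prop :=
  ∀ p : ℕ → V, G.IsPlay p → G.Consistent i σ p → p 0 = v →
    ∃ n, p n ∈ T ∧ ∀ j < n, p j ∈ U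

/-- `v ⇒_{i,U} T`: player `i` has a memoryless strategy forcing every
consistent play from `v` to reach `T` while staying in `U` beforehand. -/
def Forces (i : Bool) (v : V) (U T : Set V) : Prop :=
  ∃ σ : Strategy V, G.ValidStrategy i σ ∧ Memoryless σ ∧ G.ForcesVia i σ v U T

/-- Every play from `v` consistent with `σ` stays in `U` forever. -/
def DivergesVia (i : Bool) (σ : Strategy V) (v : V) (U : Set V) : Prop :=
  ∀ p : ℕ → V, G.IsPlay p → G.Consistent i σ p → p 0 = v → ∀ n, p n ∈ U

/-- `v ⇒^ω_{i,U}`: player `i` has a memoryless strategy keeping all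
consistent plays from `v` forever inside `U`. -/
def Diverges (i : Bool) (v : V) (U : Set V) : Prop :=
  ∃ σ : Strategy V, G.ValidStrategy i σ ∧ Memoryless σ ∧ G.DivergesVia i σ v U

/-- Priority `k` occurs infinitely often on the play `p`. -/
def InfOften (p : ℕ → V) (k : ℕ) : Prop := ∀ N, ∃ n, N ≤ n ∧ G.prio (p n) = k

/-- Player even wins a play iff the least priority occurring infinitely often
is even. -/
def EvenWinsPlay (p : ℕ → V) : Prop := Even (sInf {k | G.InfOften p k})

/-- Player `i` wins the play `p`. -/
def WinsPlay (i : Bool) (p : ℕ → V) : Prop := G.EvenWinsPlay p ↔ i = true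

/-- `σ` is a winning strategy for player `i` from `v`. -/
def WinningFrom (i : Bool) (σ : Strategy V) (v : V) : Prop :=
  ∀ p : ℕ → V, G.IsPlay p → G.Consistent i σ p → p 0 = v → G.WinsPlay i p

end ParityGame

namespace ParityGame

/-- The `R`-class of `v`. -/
def cls {V : Type u} (R : V → V → Prop) (v : V) : Set V := {x | R v x}

variable {V : Type u} (G : ParityGame V)

/-- Governed stuttering bisimulations. -/
def IsGSB (R : V → V → Prop) : Prop :=
  Equivalence R ∧ ∀ v w, R v w →
    G.prio v = G.prio w ∧
    (∀ u, ¬ R v u → (∃ v', G.edge v v' ∧ R u v') →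
      G.Forces (G.owner v) w (cls R w) (cls R u)) ∧
    (∀ i : Bool, G.Diverges i v (cls R v) → G.Diverges i w (cls R w))

end ParityGame

namespace ParityGame

open Classical

variable {V : Type u} (G : ParityGame V)

/-- A default successor. -/
noncomputable def pick (v : V) : V := Classical.choose (G.total v)

lemma pick_edge (v : V) : G.edge v (G.pick v) := Classical.choose_spec (G.total v)

/-- Attractor stages. -/
def attrN (i : Bool) (U T : Set V) : ℕ → Set V
  | 0 => T
  | k + 1 => attrN i U T k ∪ {z | z ∈ U ∧
      ((G.owner z = i ∧ ∃ y, G.edge z y ∧ y ∈ attrN i U T k) ∨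
       (G.owner z ≠ i ∧ ∀ y, G.edge z y → y ∈ attrN i U T k))}

/-- The attractor. -/
def Attr (i : Bool) (U T : Set V) : Set V := ⋃ k, G.attrN i U T k

variable {G}

lemma attrN_zero {i : Bool} {U T : Set V} : G.attrN i U T 0 = T := rfl

lemma mem_attrN_succ {i : Bool} {U T : Set V} {k : ℕ} {z : V} :
    z ∈ G.attrN i U T (k+1) ↔ z ∈ G.attrN i U T k ∨ (z ∈ U ∧
      ((G.owner z = i ∧ ∃ y, G.edge z y ∧ y ∈ G.attrN i U T k) ∨
       (G.owner z ≠ i ∧ ∀ y, G.edge z y → y ∈ G.attrN i U T k))) := Iff.rfl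

lemma attrN_le_succ {i : Bool} {U T : Set V} {k : ℕ} :
    G.attrN i U T k ⊆ G.attrN i U T (k+1) := fun _ hz => mem_attrN_succ.mpr (Or.inl hz)

lemma attrN_mono {i : Bool} {U T : Set V} {k l : ℕ} (h : k ≤ l) :
    G.attrN i U T k ⊆ G.attrN i U T l := by
  induction l with
  | zero => rw [Nat.le_zero.mp h]
  | succ l ih =>
    rcases Nat.lt_or_ge k (l+1) with h' | h'
    · exact (ih (Nat.lt_succ_iff.mp h')).trans attrN_le_succ
    · rw [le_antisymm h h']

lemma attrN_subset_attr {i : Bool} {U T : Set V} (k : ℕ) :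
    G.attrN i U T k ⊆ G.Attr i U T := Set.subset_iUnion (fun k => G.attrN i U T k) k

lemma mem_attr_iff {i : Bool} {U T : Set V} {v : V} :
    v ∈ G.Attr i U T ↔ ∃ k, v ∈ G.attrN i U T k := Set.mem_iUnion

lemma target_subset_attr {i : Bool} {U T : Set V} : T ⊆ G.Attr i U T :=
  fun z hz => attrN_subset_attr 0 (by rwa [attrN_zero])

lemma attr_bound [Fintype V] {i : Bool} {U T : Set V} :
    ∃ K, G.Attr i U T ⊆ G.attrN i U T K := by
  classical
  let f : V → ℕ := fun v => if h : v ∈ G.Attr i U T then Nat.find (mem_attr_iff.mp h) else 0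
  refine ⟨Finset.univ.sup f, fun v hv => ?_⟩
  have h1 : v ∈ G.attrN i U T (f v) := by
    simp only [f, dif_pos hv]
    exact Nat.find_spec (mem_attr_iff.mp hv)
  exact attrN_mono (Finset.le_sup (Finset.mem_univ v)) h1

lemma attr_closed_i {i : Bool} {U T : Set V} {z : V} (hzU : z ∈ U)
    (ho : G.owner z = i) {y : V} (he : G.edge z y) (hy : y ∈ G.Attr i U T) :
    z ∈ G.Attr i U T := by
  obtain ⟨k, hk⟩ := mem_attr_iff.mp hy
  exact attrN_subset_attr (k+1) (mem_attrN_succ.mpr (Or.inr ⟨hzU, Or.inl ⟨ho, y, he, hk⟩⟩))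

lemma attr_closed_o [Fintype V] {i : Bool} {U T : Set V} {z : V} (hzU : z ∈ U)
    (ho : G.owner z ≠ i) (hy : ∀ y, G.edge z y → y ∈ G.Attr i U T) :
    z ∈ G.Attr i U T := by
  obtain ⟨K, hK⟩ := attr_bound (G := G) (i := i) (U := U) (T := T)
  exact attrN_subset_attr (K+1)
    (mem_attrN_succ.mpr (Or.inr ⟨hzU, Or.inr ⟨ho, fun y he => hK (hy y he)⟩⟩))

lemma attrN_subset_union {i : Bool} {U T : Set V} (k : ℕ) :
    G.attrN i U T k ⊆ T ∪ U := by
  induction k with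
  | zero => rw [attrN_zero]; exact Set.subset_union_left
  | succ k ih =>
    intro z hz
    rcases mem_attrN_succ.mp hz with hz | ⟨hz, -⟩
    · exact ih hz
    · exact Or.inr hz

/-- Structure of a non-target attractor vertex. -/
lemma attr_step {i : Bool} {U T : Set V} {z : V} (hz : z ∈ G.Attr i U T) (hzT : z ∉ T) :
    ∃ r, z ∉ G.attrN i U T r ∧ z ∈ U ∧
      ((G.owner z = i ∧ ∃ y, G.edge z y ∧ y ∈ G.attrN i U T r) ∨
       (G.owner z ≠ i ∧ ∀ y, G.edge z y → y ∈ G.attrN i U T r)) := by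
  have hex := mem_attr_iff.mp hz
  have hspec := Nat.find_spec hex
  rcases hn : Nat.find hex with _ | r
  · rw [hn, attrN_zero] at hspec; exact absurd hspec hzT
  · rw [hn] at hspec
    have hmin : z ∉ G.attrN i U T r := Nat.find_min hex (by omega)
    rcases mem_attrN_succ.mp hspec with h | ⟨h1, h2⟩
    · exact absurd h hmin
    · exact ⟨r, hmin, h1, h2⟩

lemma attrN_mono_sets {i : Bool} {U T U' T' : Set V} (hU : U ⊆ U') (hT : T ⊆ T') (k : ℕ) :
    G.attrN i U T k ⊆ G.attrN i U' T' k := by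
  induction k with
  | zero => rw [attrN_zero, attrN_zero]; exact hT
  | succ k ih =>
    intro z hz
    rcases mem_attrN_succ.mp hz with hz | ⟨hz, ⟨ho, y, he, hy⟩ | ⟨ho, h⟩⟩
    · exact mem_attrN_succ.mpr (Or.inl (ih hz))
    · exact mem_attrN_succ.mpr (Or.inr ⟨hU hz, Or.inl ⟨ho, y, he, ih hy⟩⟩)
    · exact mem_attrN_succ.mpr (Or.inr ⟨hU hz, Or.inr ⟨ho, fun y he => ih (h y he)⟩⟩)

lemma attr_mono {i : Bool} {U T U' T' : Set V} (hU : U ⊆ U') (hT : T ⊆ T') :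
    G.Attr i U T ⊆ G.Attr i U' T' :=
  Set.iUnion_subset fun k => (attrN_mono_sets hU hT k).trans (attrN_subset_attr k)

lemma attr_trans [Fintype V] {i : Bool} {U T : Set V} :
    G.Attr i U (G.Attr i U T) ⊆ G.Attr i U T := by
  refine Set.iUnion_subset fun k => ?_
  induction k with
  | zero => rw [attrN_zero]
  | succ k ih =>
    intro z hz
    rcases mem_attrN_succ.mp hz with hz | ⟨hz, ⟨ho, y, he, hy⟩ | ⟨ho, h⟩⟩
    · exact ih hz
    · exact attr_closed_i hz ho he (ih hy)
    · exact attr_closed_o hz ho (fun y he => ih (h y he))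

end ParityGame
namespace ParityGame

variable {V : Type u} {G : ParityGame V}

lemma bool_ne_iff {b c : Bool} : b ≠ c ↔ b = !c := by cases b <;> cases c <;> simp

lemma iter_isPlay {f : V → V} (hf : ∀ z, G.edge z (f z)) (x : V) :
    G.IsPlay (fun n => f^[n] x) := fun n => by
  show G.edge (f^[n] x) (f^[n+1] x)
  rw [Function.iterate_succ_apply']; exact hf _

lemma iter_consistent {f : V → V} {j : Bool} {σ : Strategy V} (hσ : Memoryless σ)
    (hf : ∀ z, G.owner z = j → f z = σ [] z) (x : V) :
    G.Consistent j σ (fun n => f^[n] x) := by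
  intro n ho
  show f^[n+1] x = _
  rw [Function.iterate_succ_apply', hf _ ho]
  exact hσ [] _ _

/-- Soundness: the attractor strategy forces reaching the target. -/
lemma forces_of_attr [Fintype V] {i : Bool} {U T : Set V} {x : V}
    (hx : x ∈ G.Attr i U T) : G.Forces i x U T := by
  classical
  set σ : Strategy V := fun _ z =>
    if h : ∃ y, G.edge z y ∧ ∃ r, y ∈ G.attrN i U T r ∧ z ∉ G.attrN i U T r
    then h.choose else G.pick z with hσdef
  have hval : G.ValidStrategy i σ := by
    intro h z _
    show G.edge z (dite _ _ _)
    split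
    · next hq => exact hq.choose_spec.1
    · exact G.pick_edge z
  have hmem : Memoryless σ := fun _ _ _ => rfl
  have claim : ∀ k, ∀ p : ℕ → V, G.IsPlay p → G.Consistent i σ p → p 0 ∈ G.attrN i U T k →
      ∃ n, p n ∈ T ∧ ∀ j < n, p j ∈ U := by
    intro k
    induction k using Nat.strong_induction_on with
    | _ k IH =>
      intro p hp hc h0
      by_cases hT : p 0 ∈ T
      · exact ⟨0, hT, fun j hj => absurd hj (by omega)⟩
      have hA : p 0 ∈ G.Attr i U T := attrN_subset_attr k h0
      obtain ⟨r, hr, hU0, hcase⟩ := attr_step hA hT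
      have hrk : r < k := by
        by_contra h
        exact hr (attrN_mono (by omega) h0)
      have h1 : ∃ r', p 1 ∈ G.attrN i U T r' ∧ r' < k := by
        rcases hcase with ⟨ho, y, he, hy⟩ | ⟨ho, hall⟩
        · have hQ : ∃ y, G.edge (p 0) y ∧ ∃ r, y ∈ G.attrN i U T r ∧ p 0 ∉ G.attrN i U T r :=
            ⟨y, he, r, hy, hr⟩
          have hp1 : p 1 = hQ.choose := by
            rw [hc 0 ho]
            show dite _ _ _ = _
            rw [dif_pos hQ]
          obtain ⟨he', r', hy', hz'⟩ := hQ.choose_spec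
          refine ⟨r', hp1 ▸ hy', ?_⟩
          by_contra h'
          exact hz' (attrN_mono (by omega) h0)
        · exact ⟨r, hall _ (hp 0), hrk⟩
      obtain ⟨r', h1', hr'k⟩ := h1
      obtain ⟨n, hnT, hnU⟩ := IH r' hr'k (fun n => p (n+1)) (fun n => hp (n+1))
        (fun n ho => hc (n+1) ho) h1'
      refine ⟨n+1, hnT, fun j hj => ?_⟩
      cases j with
      | zero => exact hU0
      | succ j => exact hnU j (by omega)
  obtain ⟨k, hk⟩ := mem_attr_iff.mp hx
  exact ⟨σ, hval, hmem, fun p hp hc h0 => claim k p hp hc (h0 ▸ hk)⟩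

/-- Completeness: forcing implies attractor membership. -/
lemma attr_of_forces [Fintype V] {i : Bool} {U T : Set V} {x : V}
    (hF : G.Forces i x U T) : x ∈ G.Attr i U T := by
  classical
  by_contra hx
  obtain ⟨σ, hval, hmem, hfv⟩ := hF
  set A := G.Attr i U T with hA
  set f : V → V := fun z =>
    if ho : G.owner z = i then σ [] z
    else if h : ∃ y, G.edge z y ∧ y ∉ A then h.choose else G.pick z with hfdef
  have hfe : ∀ z, G.edge z (f z) := by
    intro z
    show G.edge z (dite _ _ _)
    split
    · next ho => exact hval [] z ho
    · split
      · next hq => exact hq.choose_spec.1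
      · exact G.pick_edge z
  set p : ℕ → V := fun n => f^[n] x with hpdef
  have hp : G.IsPlay p := iter_isPlay hfe x
  have hc : G.Consistent i σ p := iter_consistent hmem (fun z ho => dif_pos ho) x
  have hsucc : ∀ n, p (n+1) = f (p n) := fun n => Function.iterate_succ_apply' f n x
  have claim : ∀ n, (∀ j < n, p j ∈ U) → p n ∉ A := by
    intro n
    induction n with
    | zero => exact fun _ => hx
    | succ n IHn =>
      intro hU
      have hn : p n ∉ A := IHn (fun j hj => hU j (by omega))
      have hUn : p n ∈ U := hU n (by omega)
      by_cases ho : G.owner (p n) = i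
      · intro hin
        exact hn (attr_closed_i hUn ho (hp n) hin)
      · have hex : ∃ y, G.edge (p n) y ∧ y ∉ A := by
          by_contra h'
          push_neg at h'
          exact hn (attr_closed_o hUn ho h')
        have : p (n+1) = hex.choose := by
          rw [hsucc n]
          show dite _ _ _ = _
          rw [dif_neg ho, dif_pos hex]
        rw [this]
        exact hex.choose_spec.2
  obtain ⟨n, hnT, hnU⟩ := hfv p hp hc rfl
  exact claim n hnU (target_subset_attr hnT)

/-- Safety determinacy, spoiler direction: outside the attractor of the
complement, the opponent can stay inside `U` forever. -/
lemma div_of_not_attr [Fintype V] {i : Bool} {U : Set V} {y : V}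
    (hyU : y ∈ U) (hy : y ∉ G.Attr i U Uᶜ) : G.Diverges (!i) y U := by
  classical
  set A := G.Attr i U Uᶜ with hA
  set σ : Strategy V := fun _ z =>
    if h : ∃ w, G.edge z w ∧ w ∉ A then h.choose else G.pick z with hσdef
  have hval : G.ValidStrategy (!i) σ := by
    intro h z _
    show G.edge z (dite _ _ _)
    split
    · next hq => exact hq.choose_spec.1
    · exact G.pick_edge z
  refine ⟨σ, hval, fun _ _ _ => rfl, ?_⟩
  intro p hp hc h0 n
  have notA_mem : ∀ z, z ∉ A → z ∈ U := by
    intro z hz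
    by_contra h'
    exact hz (target_subset_attr h')
  have claim : ∀ n, p n ∉ A := by
    intro n
    induction n with
    | zero => rw [h0]; exact hy
    | succ n IHn =>
      have hUn : p n ∈ U := notA_mem _ IHn
      by_cases ho : G.owner (p n) = i
      · intro hin
        exact IHn (attr_closed_i hUn ho (hp n) hin)
      · have hex : ∃ w, G.edge (p n) w ∧ w ∉ A := by
          by_contra h'
          push_neg at h'
          exact IHn (attr_closed_o hUn ho h')
        have : p (n+1) = hex.choose := by
          rw [hc n (bool_ne_iff.mp ho)]
          show dite _ _ _ = _
          rw [dif_pos hex]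
        rw [this]
        exact hex.choose_spec.2
  exact notA_mem _ (claim n)

/-- Safety determinacy, attractor direction: inside the attractor of the
complement, the opponent cannot stay inside `U` forever. -/
lemma not_div_of_attr [Fintype V] {j : Bool} {U : Set V} {v : V}
    (hv : v ∈ G.Attr j U Uᶜ) : ¬ G.Diverges (!j) v U := by
  classical
  rintro ⟨σ, hval, hmem, hdiv⟩
  obtain ⟨σ', hval', hmem', hfv'⟩ := forces_of_attr hv
  set f : V → V := fun z => if G.owner z = j then σ' [] z else σ [] z with hfdef
  have hfe : ∀ z, G.edge z (f z) := by
    intro z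
    show G.edge z (ite _ _ _)
    split
    · next ho => exact hval' [] z ho
    · next ho => exact hval [] z (bool_ne_iff.mp ho)
  have hp : G.IsPlay (fun n => f^[n] v) := iter_isPlay hfe v
  have hc' : G.Consistent j σ' (fun n => f^[n] v) :=
    iter_consistent hmem' (fun z ho => if_pos ho) v
  have hc : G.Consistent (!j) σ (fun n => f^[n] v) :=
    iter_consistent hmem (fun z ho => if_neg (by rw [ho]; cases j <;> simp)) v
  obtain ⟨n, hnT, -⟩ := hfv' _ hp hc' rfl
  exact hnT (hdiv _ hp hc rfl n)

end ParityGame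
namespace ParityGame

variable {V : Type u} {G : ParityGame V}

lemma attr_exit [Fintype V] {i : Bool} {C T' : Set V}
    (h : ∀ z z'', z ∈ C → G.edge z z'' → z'' ∉ C → z'' ∈ T') :
    ∀ z, z ∈ G.Attr i C Cᶜ → z ∈ C → z ∈ G.Attr i C T' := by
  suffices H : ∀ k z, z ∈ G.attrN i C Cᶜ k → z ∈ C → z ∈ G.Attr i C T' by
    intro z hz hzC
    obtain ⟨k, hk⟩ := mem_attr_iff.mp hz
    exact H k z hk hzC
  intro k
  induction k with
  | zero =>
    intro z hz hzC
    rw [attrN_zero] at hz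
    exact absurd hzC hz
  | succ k ih =>
    intro z hz hzC
    rcases mem_attrN_succ.mp hz with hz | ⟨hzU, ⟨ho, w, he, hw⟩ | ⟨ho, hall⟩⟩
    · exact ih z hz hzC
    · by_cases hwC : w ∈ C
      · exact attr_closed_i hzU ho he (ih w hw hwC)
      · exact attr_closed_i hzU ho he (target_subset_attr (h z w hzC he hwC))
    · refine attr_closed_o hzU ho (fun w he => ?_)
      by_cases hwC : w ∈ C
      · exact ih w (hall w he) hwC
      · exact target_subset_attr (h z w hzC he hwC)

/-- The key transfer lemma: membership in the attractor for a region and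
target that are both unions of classes of a governed stuttering bisimulation
is invariant within classes. -/
lemma gsb_attr_transfer [Fintype V] {R : V → V → Prop} (hR : G.IsGSB R) (i : Bool)
    {𝒰 𝒟 : Set V} (hU : ∀ a b, R a b → a ∈ 𝒰 → b ∈ 𝒰)
    (hD : ∀ a b, R a b → a ∈ 𝒟 → b ∈ 𝒟) :
    ∀ x y, R x y → x ∈ G.Attr i 𝒰 𝒟 → y ∈ G.Attr i 𝒰 𝒟 := by
  classical
  obtain ⟨heq, hcond⟩ := hR
  suffices H : ∀ m, ∀ x y, R x y → x ∈ G.attrN i 𝒰 𝒟 m → y ∈ G.Attr i 𝒰 𝒟 by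
    intro x y hxy hx
    obtain ⟨m, hm⟩ := mem_attr_iff.mp hx
    exact H m x y hxy hm
  intro m
  induction m using Nat.strong_induction_on with
  | _ m IH =>
  intro x y hxy hx
  by_cases hdx : ∃ d, R x d ∧ d ∈ 𝒟
  · obtain ⟨d, hxd, hd𝒟⟩ := hdx
    exact target_subset_attr (hD d y (heq.trans (heq.symm hxd) hxy) hd𝒟)
  push_neg at hdx
  have hex : ∃ k, ∃ c, R x c ∧ c ∈ G.attrN i 𝒰 𝒟 k := ⟨m, x, heq.refl x, hx⟩
  obtain ⟨c, hxc, hc⟩ := Nat.find_spec hex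
  have hle : Nat.find hex ≤ m := Nat.find_le ⟨x, heq.refl x, hx⟩
  obtain ⟨r, hr⟩ : ∃ r, Nat.find hex = r + 1 := by
    cases h0 : Nat.find hex with
    | zero =>
      rw [h0, attrN_zero] at hc
      exact absurd hc (hdx c hxc)
    | succ r => exact ⟨r, rfl⟩
  have hcr : ∀ c', R x c' → c' ∉ G.attrN i 𝒰 𝒟 r := by
    intro c' h1 hck
    exact Nat.find_min hex (by omega) ⟨c', h1, hck⟩
  have hrm : r < m := by omega
  rw [hr] at hc
  rcases mem_attrN_succ.mp hc with hcc | ⟨hcU, hbody⟩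
  · exact absurd hcc (hcr c hxc)
  have hclsU : ∀ q, R x q → q ∈ 𝒰 := fun q hq =>
    hU c q (heq.trans (heq.symm hxc) hq) hcU
  rcases hbody with ⟨hoc, d, hcd, hdr⟩ | ⟨hoc, hall⟩
  · -- the minimal-rank vertex is owned by `i`
    have hxd : ¬ R x d := fun h => hcr d h hdr
    have hclsd : ∀ q, R d q → q ∈ G.Attr i 𝒰 𝒟 := fun q hq => IH r hrm d q hq hdr
    have hcy : R c y := heq.trans (heq.symm hxc) hxy
    have hF := (hcond c y hcy).2.1 d (fun h => hxd (heq.trans hxc h)) ⟨d, hcd, heq.refl d⟩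
    rw [hoc] at hF
    have hyA : y ∈ G.Attr i (cls R y) (cls R d) := attr_of_forces hF
    have h1 : cls R y ⊆ 𝒰 := fun q hq => hclsU q (heq.trans hxy hq)
    have h2 : cls R d ⊆ G.Attr i 𝒰 𝒟 := fun q hq => hclsd q hq
    exact attr_trans (attr_mono h1 h2 hyA)
  · -- the minimal-rank vertex is owned by the opponent
    have hexit : ∀ z z'', R x z → G.edge z z'' → ¬ R x z'' →
        ∀ q, R z'' q → q ∈ G.Attr i 𝒰 𝒟 := by
      intro z z'' hxz hzz hnz
      have hzc : R z c := heq.trans (heq.symm hxz) hxc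
      obtain ⟨σ, hval, hmem, hfv⟩ :=
        (hcond z c hzc).2.1 z'' (fun h => hnz (heq.trans hxz h)) ⟨z'', hzz, heq.refl z''⟩
      set f : V → V := fun w => if G.owner w = G.owner z then σ [] w else G.pick w with hfdef
      have hfe : ∀ w, G.edge w (f w) := by
        intro w
        show G.edge w (ite _ _ _)
        split
        · next ho => exact hval [] w ho
        · exact G.pick_edge w
      have hp : G.IsPlay (fun n => f^[n] c) := iter_isPlay hfe c
      have hcons : G.Consistent (G.owner z) σ (fun n => f^[n] c) :=
        iter_consistent hmem (fun w ho => if_pos ho) c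
      obtain ⟨n, hnT, hnU⟩ := hfv _ hp hcons rfl
      have hp1 : G.edge c (f^[1] c) := by
        show G.edge c (f c)
        exact hfe c
      have hp1r : f^[1] c ∈ G.attrN i 𝒰 𝒟 r := hall _ hp1
      have hnxp1 : ¬ R x (f^[1] c) := fun h => hcr _ h hp1r
      have hn1 : n = 1 := by
        rcases n with _ | _ | n
        · exact absurd (heq.trans hxc (heq.symm hnT)) hnz
        · rfl
        · exact absurd (heq.trans hxc (hnU 1 (by omega))) hnxp1
      rw [hn1] at hnT
      intro q hq
      exact IH r hrm (f^[1] c) q (heq.trans (heq.symm hnT) hq) hp1r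
    have hndivc : ¬ G.Diverges (!i) c (cls R c) := by
      rintro ⟨σ, hval, hmem, hdiv⟩
      set f : V → V := fun w => if G.owner w = !i then σ [] w else G.pick w with hfdef
      have hfe : ∀ w, G.edge w (f w) := by
        intro w
        show G.edge w (ite _ _ _)
        split
        · next ho => exact hval [] w ho
        · exact G.pick_edge w
      have hp := iter_isPlay (G := G) hfe c
      have hcons : G.Consistent (!i) σ (fun n => f^[n] c) :=
        iter_consistent hmem (fun w ho => if_pos ho) c
      have h1 : R c (f^[1] c) := hdiv _ hp hcons rfl 1
      have he1 : G.edge c (f^[1] c) := by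
        show G.edge c (f c)
        exact hfe c
      exact hcr _ (heq.trans hxc h1) (hall _ he1)
    have hndivy : ¬ G.Diverges (!i) y (cls R y) := by
      intro hdy
      exact hndivc ((hcond y c (heq.trans (heq.symm hxy) hxc)).2.2 (!i) hdy)
    have hyC : y ∈ cls R y := heq.refl y
    have hyAC : y ∈ G.Attr i (cls R y) (cls R y)ᶜ := by
      by_contra h
      exact hndivy (div_of_not_attr hyC h)
    have hCx : ∀ q, q ∈ cls R y ↔ R x q := fun q =>
      ⟨fun h => heq.trans hxy h, fun h => heq.trans (heq.symm hxy) h⟩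
    have hexitC : ∀ z z'', z ∈ cls R y → G.edge z z'' → z'' ∉ cls R y →
        z'' ∈ G.Attr i 𝒰 𝒟 := by
      intro z z'' hz he hz''
      exact hexit z z'' ((hCx z).mp hz) he (fun h => hz'' ((hCx z'').mpr h)) z'' (heq.refl z'')
    have h2 : y ∈ G.Attr i (cls R y) (G.Attr i 𝒰 𝒟) := attr_exit hexitC y hyAC hyC
    have hCU : cls R y ⊆ 𝒰 := fun q hq => hclsU q ((hCx q).mp hq)
    exact attr_trans (attr_mono hCU (fun q hq => hq) h2)

end ParityGame
namespace ParityGame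

variable {V : Type u} {G : ParityGame V}

/-- Equality is a governed stuttering bisimulation. -/
lemma gsb_eq : G.IsGSB (fun a b : V => a = b) := by
  classical
  refine ⟨⟨fun a => rfl, fun h => h.symm, fun h1 h2 => h1.trans h2⟩, ?_⟩
  intro v w hvw
  subst hvw
  refine ⟨rfl, ?_, fun i h => h⟩
  rintro u hvu ⟨v', hedge, rfl⟩
  set σ : Strategy V := fun _ z => if z = v then u else G.pick z with hσ
  refine ⟨σ, ?_, fun _ _ _ => rfl, ?_⟩
  · intro h z _
    show G.edge z (ite _ _ _)
    split
    · next hzv => rw [hzv]; exact hedge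
    · exact G.pick_edge z
  · intro p hp hc h0
    have ho0 : G.owner (p 0) = G.owner v := by rw [h0]
    have h1 : p 1 = u := by
      rw [hc 0 ho0]
      show ite _ _ _ = _
      rw [if_pos h0]
    refine ⟨1, ?_, ?_⟩
    · show u = p 1
      exact h1.symm
    · intro j hj
      interval_cases j
      show v = p 0
      exact h0.symm

/-- Part 1 of the theorem: the reflexive transitive closure of the union of
two governed stuttering bisimulations is a governed stuttering bisimulation. -/
lemma gsb_union [Fintype V] (R S : V → V → Prop) (hR : G.IsGSB R) (hS : G.IsGSB S) :
    G.IsGSB (Relation.ReflTransGen (fun a b => R a b ∨ S a b)) := by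
  classical
  set T : V → V → Prop := Relation.ReflTransGen (fun a b => R a b ∨ S a b) with hTdef
  have hsymm : Symmetric T :=
    by
      haveI : Std.Symm (fun a b => R a b ∨ S a b) :=
        ⟨fun a b h => h.elim (fun h => Or.inl (hR.1.symm h)) (fun h => Or.inr (hS.1.symm h))⟩
      exact fun a b h => Std.Symm.symm a b h
  have heqT : Equivalence T :=
    ⟨fun a => Relation.ReflTransGen.refl, fun h => hsymm h, fun h1 h2 => h1.trans h2⟩
  have hRT : ∀ a b, R a b → T a b := fun a b h => Relation.ReflTransGen.single (Or.inl h)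
  have hST : ∀ a b, S a b → T a b := fun a b h => Relation.ReflTransGen.single (Or.inr h)
  have hprio : ∀ a b, T a b → G.prio a = G.prio b := by
    intro a b h
    induction h with
    | refl => rfl
    | tail h1 h2 ih =>
      rcases h2 with h2 | h2
      · exact ih.trans (hR.2 _ _ h2).1
      · exact ih.trans (hS.2 _ _ h2).1
  -- closure of T-classes under R and S
  have hclR : ∀ (W : Set V), (∀ q, q ∈ W ↔ ∃ z, T z q ∧ z ∈ W) → True := fun _ _ => trivial
  refine ⟨heqT, fun v w hvw => ⟨hprio v w hvw, ?_, ?_⟩⟩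
  · -- forcing condition
    rintro u hvu ⟨v', hedge, huv'⟩
    have hUR : ∀ a b, R a b → a ∈ cls T v → b ∈ cls T v :=
      fun a b hab ha => heqT.trans ha (hRT _ _ hab)
    have hUS : ∀ a b, S a b → a ∈ cls T v → b ∈ cls T v :=
      fun a b hab ha => heqT.trans ha (hST _ _ hab)
    have hDR : ∀ a b, R a b → a ∈ cls T u → b ∈ cls T u :=
      fun a b hab ha => heqT.trans ha (hRT _ _ hab)
    have hDS : ∀ a b, S a b → a ∈ cls T u → b ∈ cls T u :=
      fun a b hab ha => heqT.trans ha (hST _ _ hab)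
    have hstart : v ∈ G.Attr (G.owner v) (cls T v) (cls T u) := by
      have hnR : ¬ R v v' := fun h => hvu (heqT.trans (hRT _ _ h) (heqT.symm huv'))
      have hF := (hR.2 v v (hR.1.refl v)).2.1 v' hnR ⟨v', hedge, hR.1.refl v'⟩
      refine attr_mono ?_ ?_ (attr_of_forces hF)
      · exact fun q hq => hRT _ _ hq
      · exact fun q hq => heqT.trans huv' (hRT _ _ hq)
    have hattr : ∀ w', T v w' → w' ∈ G.Attr (G.owner v) (cls T v) (cls T u) := by
      intro w' h
      induction h with
      | refl => exact hstart
      | tail h1 h2 ih =>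
        rcases h2 with h2 | h2
        · exact gsb_attr_transfer hR (G.owner v) hUR hDR _ _ h2 ih
        · exact gsb_attr_transfer hS (G.owner v) hUS hDS _ _ h2 ih
    have hclsw : cls T w = cls T v :=
      Set.ext fun q => ⟨fun h => heqT.trans hvw h, fun h => heqT.trans (heqT.symm hvw) h⟩
    rw [hclsw]
    exact forces_of_attr (hattr w hvw)
  · -- divergence condition
    intro j hdiv
    have hUR : ∀ a b, R a b → a ∈ cls T v → b ∈ cls T v :=
      fun a b hab ha => heqT.trans ha (hRT _ _ hab)
    have hUS : ∀ a b, S a b → a ∈ cls T v → b ∈ cls T v :=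
      fun a b hab ha => heqT.trans ha (hST _ _ hab)
    have hDR : ∀ a b, R a b → a ∈ (cls T v)ᶜ → b ∈ (cls T v)ᶜ :=
      fun a b hab ha hb => ha (heqT.trans hb (hRT _ _ (hR.1.symm hab)))
    have hDS : ∀ a b, S a b → a ∈ (cls T v)ᶜ → b ∈ (cls T v)ᶜ :=
      fun a b hab ha hb => ha (heqT.trans hb (hST _ _ (hS.1.symm hab)))
    have hnv : v ∉ G.Attr (!j) (cls T v) (cls T v)ᶜ := by
      intro h
      exact not_div_of_attr h (by rw [Bool.not_not]; exact hdiv)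
    have hnattr : ∀ w', T v w' → w' ∉ G.Attr (!j) (cls T v) (cls T v)ᶜ := by
      intro w' h
      induction h with
      | refl => exact hnv
      | tail h1 h2 ih =>
        intro hmem
        apply ih
        rcases h2 with h2 | h2
        · exact gsb_attr_transfer hR (!j) hUR hDR _ _ (hR.1.symm h2) hmem
        · exact gsb_attr_transfer hS (!j) hUS hDS _ _ (hS.1.symm h2) hmem
    have hclsw : cls T w = cls T v :=
      Set.ext fun q => ⟨fun h => heqT.trans hvw h, fun h => heqT.trans (heqT.symm hvw) h⟩
    rw [hclsw]
    have := div_of_not_attr (G := G) (i := !j) hvw (hnattr w hvw)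
    rwa [Bool.not_not] at this

end ParityGame

/-- Governed stuttering bisimilarity is an equivalence: the reflexive-transitive
closure of the union of two governed stuttering bisimulations is again one,
and hence so is the union of all governed stuttering bisimulations. -/
theorem gsb_closure_union {V : Type u} [Fintype V] (G : ParityGame V) :
    (∀ R S : V → V → Prop, G.IsGSB R → G.IsGSB S →
      G.IsGSB (Relation.ReflTransGen (fun a b => R a b ∨ S a b))) ∧
    G.IsGSB (fun v w => ∃ R : V → V → Prop, G.IsGSB R ∧ R v w) := by
  classical
  refine ⟨fun R S hR hS => ParityGame.gsb_union R S hR hS, ?_⟩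
  have hcomb : ∀ s : Finset (V × V), ∃ T : V → V → Prop, G.IsGSB T ∧
      ∀ p ∈ s, (∃ R : V → V → Prop, G.IsGSB R ∧ R p.1 p.2) → T p.1 p.2 := by
    intro s
    induction s using Finset.induction_on with
    | empty =>
      exact ⟨fun a b => a = b, ParityGame.gsb_eq,
        fun p hp => absurd hp (Finset.notMem_empty p)⟩
    | @insert a s hnotmem ih =>
      obtain ⟨T, hT, hTs⟩ := ih
      by_cases hU : ∃ R : V → V → Prop, G.IsGSB R ∧ R a.1 a.2
      · obtain ⟨R, hRgsb, hRa⟩ := hU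
        refine ⟨Relation.ReflTransGen (fun x y => T x y ∨ R x y),
          ParityGame.gsb_union T R hT hRgsb, ?_⟩
        intro p hp hpU
        rcases Finset.mem_insert.mp hp with rfl | hp
        · exact Relation.ReflTransGen.single (Or.inr hRa)
        · exact Relation.ReflTransGen.single (Or.inl (hTs p hp hpU))
      · refine ⟨T, hT, ?_⟩
        intro p hp hpU
        rcases Finset.mem_insert.mp hp with rfl | hp
        · exact absurd hpU hU
        · exact hTs p hp hpU
  obtain ⟨T, hT, hTall⟩ := hcomb Finset.univ
  have hUT : (fun v w => ∃ R : V → V → Prop, G.IsGSB R ∧ R v w) = T := by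
    funext v w
    apply propext
    constructor
    · intro h
      exact hTall (v, w) (Finset.mem_univ _) h
    · intro h
      exact ⟨T, hT, h⟩
  rw [hUT]
  exact hT
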